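/- arXiv:2408.00750 — 2 statements merged into one kernel-verified Lean document; each statement's English description precedes it below -/
import Mathlib

section
/- Let T ∈ (ℤ/p^αℤ)[z] have degree t ≥ 1 with unit constant and leading coefficients, and let 0 ≤ i ≤ t − 1. Then the coefficient sequence of the Laurent series 1/(z^{-i} T) (i.e., z^i/T) is purely periodic, its period begins with i zeros and ends with exactly t − 1 − i zeros. -/
/-!
As `T` has unit leading coefficient, `R[X]/(T)` is finite, and as `T(0)` is a unit, so is the
class of `X`; hence `X ^ n ≡ 1 mod T` for some `n > 0`. Writing `X ^ n - 1 = T * Q` gives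
`1/T = -Q/(1 - X ^ n)` with `deg Q < n`, so the coefficients of `1/T` are purely periodic.
Conversely, for every period `m` we get `T * trunc_m (1/T) = 1 - X ^ m`, so `trunc_m (1/T)` has
degree `m - t` and unit leading coefficient: a period of `1/T` ends with `t - 1` zeros preceded by
a unit. Multiplying by `X ^ i` moves `i` of these zeros to the front without changing the periods.
-/

open scoped Polynomial
open Function

variable {R : Type*} [CommRing R]

namespace Polynomial

theorem leadingCoeff_mul_leadingCoeff_of_X_pow_sub_one_eq_mul [Nontrivial R] {T Q : R[X]}
    {m : ℕ} (hm : 0 < m) (hlead : IsUnit T.leadingCoeff) (h : X ^ m - 1 = T * Q) :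
    T.leadingCoeff * Q.leadingCoeff = 1 := by
  have hQ : Q ≠ 0 := by
    rintro rfl
    rw [mul_zero, ← C_1] at h
    exact (monic_X_pow_sub_C 1 hm.ne').ne_zero h
  rw [← leadingCoeff_mul' (hlead.mul_right_eq_zero.not.mpr (leadingCoeff_ne_zero.mpr hQ)), ← h,
    ← C_1, leadingCoeff_X_pow_sub_C hm]

theorem natDegree_add_natDegree_of_X_pow_sub_one_eq_mul [Nontrivial R] {T Q : R[X]} {m : ℕ}
    (hm : 0 < m) (hlead : IsUnit T.leadingCoeff) (h : X ^ m - 1 = T * Q) :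
    T.natDegree + Q.natDegree = m := by
  have hlc := leadingCoeff_mul_leadingCoeff_of_X_pow_sub_one_eq_mul hm hlead h
  rw [← natDegree_mul' (hlc ▸ one_ne_zero), ← h, ← C_1, natDegree_X_pow_sub_C]

theorem Monic.exists_dvd_X_pow_sub_one [Finite R] {g : R[X]} (hg : g.Monic)
    (h0 : IsUnit (g.coeff 0)) : ∃ n, 0 < n ∧ g ∣ X ^ n - 1 := by
  have : Module.Finite R (AdjoinRoot g) := hg.finite_adjoinRoot
  have : Finite (AdjoinRoot g) := Module.finite_of_finite R
  -- `X ∣ g - C (g 0)` and `g = 0` in `R[X]/(g)`, so the root divides the unit `-g 0`.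
  have hroot : IsUnit (AdjoinRoot.root g) := by
    refine isUnit_of_dvd_unit (y := -AdjoinRoot.of g (g.coeff 0)) ?_ (h0.map _).neg
    have := (AdjoinRoot.mk g).map_dvd (X_dvd_sub_C (p := g))
    simpa [AdjoinRoot.mk_self] using this
  obtain ⟨n, hn, hpow⟩ := (isOfFinOrder_of_finite hroot.unit).exists_pow_eq_one
  refine ⟨n, hn, AdjoinRoot.mk_eq_zero.mp ?_⟩
  rw [map_sub, map_pow, AdjoinRoot.mk_X, map_one, sub_eq_zero]
  simpa [Units.ext_iff] using hpow

theorem exists_dvd_X_pow_sub_one [Finite R] {T : R[X]}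
    (h0 : IsUnit (T.coeff 0)) (hlead : IsUnit T.leadingCoeff) : ∃ n, 0 < n ∧ T ∣ X ^ n - 1 := by
  have hmonic := monic_of_isUnit_leadingCoeff_inv_smul hlead
  have hcoeff : IsUnit ((hlead.unit⁻¹ • T).coeff 0) := by
    simpa [coeff_smul, Units.smul_def] using (hlead.unit⁻¹).isUnit.mul h0
  obtain ⟨n, hn, hdvd⟩ := hmonic.exists_dvd_X_pow_sub_one hcoeff
  refine ⟨n, hn, dvd_trans ?_ hdvd⟩
  exact ⟨C (↑hlead.unit⁻¹ : R), by rw [Units.smul_def, smul_eq_C_mul, mul_comm]⟩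

end Polynomial

namespace PowerSeries

theorem coeff_mul_one_sub_X_pow (F : R⟦X⟧) (m n : ℕ) :
    coeff n (F * (1 - X ^ m)) = coeff n F - if m ≤ n then coeff (n - m) F else 0 := by
  rw [mul_sub, mul_one, map_sub, coeff_mul_X_pow']

theorem periodic_coeff_of_mul_one_sub_X_pow_eq {F : R⟦X⟧} {m : ℕ} {P : R[X]}
    (h : F * (1 - X ^ m) = (P : R⟦X⟧)) (hP : P.degree < m) : Periodic (fun n => coeff n F) m := by
  intro n
  have hn := congrArg (coeff (n + m)) h
  rw [coeff_mul_one_sub_X_pow, if_pos (Nat.le_add_left m n), Nat.add_sub_cancel,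
    Polynomial.coeff_coe, Polynomial.coeff_eq_zero_of_degree_lt
      (hP.trans_le (by exact_mod_cast Nat.le_add_left m n))] at hn
  exact sub_eq_zero.mp hn

theorem mul_one_sub_X_pow_eq_trunc {F : R⟦X⟧} {m : ℕ} (h : Periodic (fun n => coeff n F) m) :
    F * (1 - X ^ m) = (trunc m F : R⟦X⟧) := by
  ext n
  rw [coeff_mul_one_sub_X_pow, Polynomial.coeff_coe, coeff_trunc]
  by_cases hn : n < m
  · rw [if_neg (by omega), if_pos hn, sub_zero]
  · rw [if_pos (by omega), if_neg hn, ← Nat.sub_add_cancel (not_lt.mp hn), Nat.add_sub_cancel]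
    exact sub_eq_zero.mpr (h (n - m))

theorem periodic_coeff_of_mul_eq_one [Finite R] {T : R[X]} {F : R⟦X⟧} (h0 : IsUnit (T.coeff 0))
    (hlead : IsUnit T.leadingCoeff) (hdeg : 0 < T.natDegree) (hF : F * T = 1) :
    ∃ m, 0 < m ∧ Periodic (fun n => coeff n F) m := by
  have : Nontrivial R := by
    by_contra h
    rw [not_nontrivial_iff_subsingleton] at h
    simp [Subsingleton.elim T 0] at hdeg
  obtain ⟨m, hm, Q, hQ⟩ := Polynomial.exists_dvd_X_pow_sub_one h0 hlead
  have hdegQ := Polynomial.natDegree_add_natDegree_of_X_pow_sub_one_eq_mul hm hlead hQ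
  refine ⟨m, hm, periodic_coeff_of_mul_one_sub_X_pow_eq (P := -Q) ?_ ?_⟩
  · have hcoe : (X ^ m - 1 : R⟦X⟧) = T * Q := by
      simpa using congrArg (↑· : R[X] → R⟦X⟧) hQ
    calc F * (1 - X ^ m) = -(F * (T : R⟦X⟧) * (Q : R⟦X⟧)) := by
          rw [mul_assoc, ← hcoe]; ring
      _ = ((-Q : R[X]) : R⟦X⟧) := by rw [hF, one_mul, Polynomial.coe_neg]
  · rw [Polynomial.degree_neg]
    exact Polynomial.degree_le_natDegree.trans_lt (by exact_mod_cast by omega)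

section Periodic

variable {T : R[X]} {F : R⟦X⟧} {m : ℕ}

theorem X_pow_sub_one_eq_mul_neg_trunc (hF : F * T = 1)
    (hper : Periodic (fun n => coeff n F) m) :
    Polynomial.X ^ m - 1 = T * -trunc m F := by
  apply Polynomial.coe_injective
  rw [Polynomial.coe_mul, Polynomial.coe_neg, ← mul_one_sub_X_pow_eq_trunc hper]
  push_cast
  linear_combination (1 - X ^ m) * hF

theorem natDegree_add_natDegree_trunc_of_periodic [Nontrivial R] (hlead : IsUnit T.leadingCoeff)
    (hF : F * T = 1) (hm : 0 < m) (hper : Periodic (fun n => coeff n F) m) :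
    T.natDegree + (trunc m F).natDegree = m := by
  simpa using Polynomial.natDegree_add_natDegree_of_X_pow_sub_one_eq_mul hm hlead
    (X_pow_sub_one_eq_mul_neg_trunc hF hper)

theorem coeff_eq_zero_of_periodic [Nontrivial R] (hlead : IsUnit T.leadingCoeff)
    (hF : F * T = 1) (hm : 0 < m)
    (hper : Periodic (fun n => coeff n F) m) {n : ℕ} (hn : m - T.natDegree < n) (hnm : n < m) :
    coeff n F = 0 := by
  have hdeg := natDegree_add_natDegree_trunc_of_periodic hlead hF hm hper
  simpa [coeff_trunc, hnm] using
    Polynomial.coeff_eq_zero_of_natDegree_lt (p := trunc m F) (n := n) (by omega)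

theorem isUnit_coeff_of_periodic [Nontrivial R] (hlead : IsUnit T.leadingCoeff)
    (hF : F * T = 1) (hm : 0 < m)
    (hper : Periodic (fun n => coeff n F) m) : IsUnit (coeff (m - T.natDegree) F) := by
  have hdeg := natDegree_add_natDegree_trunc_of_periodic hlead hF hm hper
  have hlc := Polynomial.leadingCoeff_mul_leadingCoeff_of_X_pow_sub_one_eq_mul hm hlead
    (X_pow_sub_one_eq_mul_neg_trunc hF hper)
  have hlt : (trunc m F).natDegree < m := by
    simpa [Nat.sub_add_cancel hm] using natDegree_trunc_lt F (m - 1)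
  have hunit : IsUnit (trunc m F).leadingCoeff := by
    simpa using IsUnit.of_mul_eq_one_right _ hlc
  rwa [Polynomial.leadingCoeff, coeff_trunc, if_pos hlt,
    show (trunc m F).natDegree = m - T.natDegree by omega] at hunit

end Periodic

end PowerSeries

section Shift

variable {M : Type*} [Zero M] {a b : ℕ → M} {i m : ℕ}

theorem periodic_of_periodic_shift (hb : ∀ n, b n = if n < i then 0 else a (n - i))
    (h : Periodic b m) : Periodic a m := by
  intro n
  simpa [hb, Nat.add_right_comm n i m] using h (n + i)

theorem periodic_shift_of_periodic (hb : ∀ n, b n = if n < i then 0 else a (n - i))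
    (ha : Periodic a m) (hzero : ∀ n, m - i ≤ n → n < m → a n = 0) : Periodic b m := by
  intro n
  rw [hb, hb]
  split_ifs
  · rfl
  · omega
  · exact hzero _ (by omega) (by omega)
  · rw [show n + m - i = n - i + m by omega]
    exact ha _

end Shift

/-- Let `T ∈ (ℤ/p^αℤ)[z]` have degree `t ≥ 1` with unit constant and leading
coefficients, write `1/T = Σ a(n) zⁿ`, and let `0 ≤ i ≤ t - 1`.  The coefficient
sequence `b` of `zⁱ/T`, given by `b(n) = a(n - i)` for `n ≥ i` and `b(n) = 0` for
`n < i`, is purely periodic; its period begins with `i` zeros and ends with exactly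
`t - 1 - i` zeros. -/
theorem stmt_5 (p : ℕ) [Fact p.Prime] (α : ℕ) (hα : 1 ≤ α)
    (T : Polynomial (ZMod (p ^ α))) (t : ℕ) (ht : T.natDegree = t) (ht1 : 1 ≤ t)
    (h0 : IsUnit (T.coeff 0)) (hlead : IsUnit T.leadingCoeff)
    (F : PowerSeries (ZMod (p ^ α))) (hF : F * (T : PowerSeries (ZMod (p ^ α))) = 1)
    (a : ℕ → ZMod (p ^ α)) (ha : ∀ n, a n = PowerSeries.coeff n F)
    (i : ℕ) (hi : i ≤ t - 1)
    (b : ℕ → ZMod (p ^ α)) (hb : ∀ n, b n = if n < i then 0 else a (n - i)) :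
    ∃ m : ℕ, 0 < m ∧ (∀ n, b (n + m) = b n) ∧
      (∀ m', 0 < m' → (∀ n, b (n + m') = b n) → m ≤ m') ∧
      (∀ j, j < i → b j = 0) ∧
      (∀ j, 1 ≤ j → j ≤ t - 1 - i → b (m - j) = 0) ∧
      b (m - (t - i)) ≠ 0 := by
  have : Fact (1 < p ^ α) := ⟨Nat.one_lt_pow (by omega) (Fact.out : p.Prime).one_lt⟩
  obtain rfl : a = fun n => PowerSeries.coeff n F := funext ha
  subst ht
  have hex := PowerSeries.periodic_coeff_of_mul_eq_one h0 hlead ht1 hF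
  classical
  obtain ⟨hm, hper⟩ := Nat.find_spec hex
  set m := Nat.find hex
  have hzero : ∀ n, m - T.natDegree < n → n < m → PowerSeries.coeff n F = 0 :=
    fun n => PowerSeries.coeff_eq_zero_of_periodic hlead hF hm hper
  have htm := PowerSeries.natDegree_add_natDegree_trunc_of_periodic hlead hF hm hper
  refine ⟨m, hm, periodic_shift_of_periodic hb hper fun n h₁ h₂ => hzero n (by omega) h₂,
    fun m' hm' hper' => Nat.find_min' hex ⟨hm', periodic_of_periodic_shift hb hper'⟩,
    fun j hj => by rw [hb, if_pos hj], fun j hj₁ hj₂ => ?_, ?_⟩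
  · rw [hb, if_neg (by omega)]
    exact hzero _ (by omega) (by omega)
  · rw [hb, if_neg (by omega), show m - (T.natDegree - i) - i = m - T.natDegree by omega]
    exact (PowerSeries.isUnit_coeff_of_periodic hlead hF hm hper).ne_zero
end

section
/- Let Q ∈ (ℤ/p^βℤ)[x, y, y⁻¹] be a Laurent polynomial with unit constant term, and set Δ = Q(x^p, y^p) − Q(x, y)^p, which satisfies Δ ≡ 0 mod p. Then for every k ≥ 0, the Laurent series Q(x^p, y^p)^{k+β} / Q(x, y)^{k+1} equals the Laurent polynomial Σ_{m=k+1}^{k+β} C(k+β, m) Q^{pm−k−1} Δ^{k+β−m}; in particular it is a Laurent polynomial. -/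
/-!
Modulo `p`, the substitution `x ↦ x ^ p`, `y ↦ y ^ p` agrees with the Frobenius: both are ring
homomorphisms into a ring of characteristic `p` that fix the coefficients in `ZMod (p ^ β)` and
raise `x` and `y` to the `p`-th power. Hence `p ∣ Δ`, and `Δ ^ β = 0` since `p ^ β = 0`. In the
binomial expansion of `(Q ^ p + Δ) ^ (k + β)` every term with `m ≤ k` contains `Δ ^ β`, and every
remaining term contains `Q ^ (p * m)` with `p * m ≥ k + 1`.
-/
open Polynomial LaurentPolynomial

namespace LaurentPolynomial

variable {R : Type*} [CommSemiring R]

noncomputable def expand (p : ℕ) : R[T;T⁻¹] →+* R[T;T⁻¹] :=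
  AddMonoidAlgebra.mapDomainRingHom R (AddMonoidHom.mulLeft (p : ℤ))

theorem expand_single (p : ℕ) (n : ℤ) (r : R) :
    expand p (.single n r) = .single (p * n) r :=
  AddMonoidAlgebra.mapDomain_single

theorem expand_T (p : ℕ) (n : ℤ) : expand p (T n : R[T;T⁻¹]) = T n ^ p := by
  rw [T_pow, T, expand_single, T]

end LaurentPolynomial

theorem RingHom.map_expand_map_expand_eq_pow {n p : ℕ} {S : Type*} [CommRing S] [ExpChar S p]
    (f : (ZMod n)[T;T⁻¹][X] →+* S) (Q : (ZMod n)[T;T⁻¹][X]) :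
    f (Polynomial.expand _ p (Q.map (LaurentPolynomial.expand p))) = f Q ^ p := by
  have hcoeff : ((f.comp Polynomial.C).comp (LaurentPolynomial.expand p)) =
      (frobenius S p).comp (f.comp Polynomial.C) := by
    refine AddMonoidAlgebra.ringHom_ext (fun r => ?_) (fun m => ?_)
    · exact RingHom.congr_fun (RingHom.ext_zmod
        (((f.comp Polynomial.C).comp (LaurentPolynomial.expand p)).comp LaurentPolynomial.C)
        (((frobenius S p).comp (f.comp Polynomial.C)).comp LaurentPolynomial.C)) r
    · show f (Polynomial.C (LaurentPolynomial.expand p (T m))) =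
        frobenius S p (f (Polynomial.C (T m)))
      rw [expand_T, map_pow, map_pow, frobenius_def]
  have hpoly : (f.comp ((Polynomial.expand _ p).toRingHom.comp
      (Polynomial.mapRingHom (LaurentPolynomial.expand p)))) = (frobenius S p).comp f := by
    refine Polynomial.ringHom_ext (fun a => ?_) ?_
    · simpa using congrArg (· a) hcoeff
    · simp [frobenius_def]
  exact congrArg (· Q) hpoly

theorem natCast_pow_eq_zero_of_zmod_algebra (p β : ℕ) {A : Type*} [Semiring A]
    [Algebra (ZMod (p ^ β)) A] : (p : A) ^ β = 0 := by
  rw [← Nat.cast_pow, ← map_natCast (algebraMap (ZMod (p ^ β)) A), ZMod.natCast_self, map_zero]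

theorem natCast_dvd_expand_map_expand_sub_pow {p β : ℕ} [Fact p.Prime] (hβ : 1 ≤ β)
    (Q : (ZMod (p ^ β))[T;T⁻¹][X]) :
    (p : (ZMod (p ^ β))[T;T⁻¹][X]) ∣
      Polynomial.expand _ p (Q.map (LaurentPolynomial.expand p)) - Q ^ p := by
  have : Fact (1 < p ^ β) := ⟨Nat.one_lt_pow (by omega) (Fact.out : p.Prime).one_lt⟩
  have hp : (p : (ZMod (p ^ β))[T;T⁻¹][X]) ∈ nonunits _ :=
    IsNilpotent.not_isUnit ⟨β, natCast_pow_eq_zero_of_zmod_algebra p β⟩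
  have := CharP.quotient _ p hp
  rw [← Ideal.mem_span_singleton, ← Ideal.Quotient.eq_zero_iff_mem, map_sub, map_pow,
    sub_eq_zero]
  exact RingHom.map_expand_map_expand_eq_pow
    (S := _ ⧸ Ideal.span {(p : (ZMod (p ^ β))[T;T⁻¹][X])}) _ Q

theorem add_pow_eq_sum_Icc_of_pow_eq_zero {A : Type*} [CommSemiring A] {a d : A} {β : ℕ}
    (hd : d ^ β = 0) (k : ℕ) :
    (a + d) ^ (k + β) = ∑ m ∈ Finset.Icc (k + 1) (k + β),
      ((k + β).choose m : A) * a ^ m * d ^ (k + β - m) := by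
  have hsub : Finset.Icc (k + 1) (k + β) ⊆ Finset.range (k + β + 1) := fun m hm => by
    simp only [Finset.mem_Icc, Finset.mem_range] at hm ⊢; omega
  rw [add_pow, ← Finset.sum_subset hsub]
  · exact Finset.sum_congr rfl fun m _ => by ring
  · intro m hm hmk
    simp only [Finset.mem_Icc, Finset.mem_range, not_and, not_le] at hm hmk
    rw [show k + β - m = β + (k - m) by omega, pow_add, hd, zero_mul, mul_zero, zero_mul]

/-- Let `Q ∈ (ℤ/p^βℤ)[x, y, y⁻¹]` (modeled as a polynomial in `x` with Laurent
polynomial coefficients in `y`) have unit constant term, and set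
`Δ = Q(x^p, y^p) - Q(x, y)^p`.  Then `Δ ≡ 0 mod p`, and for every `k ≥ 0`,
`Q(x^p, y^p)^{k+β} = (Σ_{m=k+1}^{k+β} C(k+β, m) Q^{pm-k-1} Δ^{k+β-m}) · Q^{k+1}`;
in particular the Laurent series `Q(x^p, y^p)^{k+β} / Q^{k+1}` is the displayed
Laurent polynomial. -/
theorem stmt_13 (p : ℕ) [Fact p.Prime] (β : ℕ) (hβ : 1 ≤ β)
    (Q : Polynomial (LaurentPolynomial (ZMod (p ^ β))))
    (Qf : Polynomial (LaurentPolynomial (ZMod (p ^ β))))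
    (hQf : Qf = Polynomial.expand (LaurentPolynomial (ZMod (p ^ β))) p
      (Q.map (AddMonoidAlgebra.mapDomainRingHom (ZMod (p ^ β))
        (AddMonoidHom.mk' (fun n : ℤ => (p : ℤ) * n) (fun a b => by ring)))))
    (Δ : Polynomial (LaurentPolynomial (ZMod (p ^ β))))
    (hΔ : Δ = Qf - Q ^ p) :
    (p : Polynomial (LaurentPolynomial (ZMod (p ^ β)))) ∣ Δ ∧
    ∀ k : ℕ, Qf ^ (k + β) =
      (∑ m ∈ Finset.Icc (k + 1) (k + β),
        ((k + β).choose m : Polynomial (LaurentPolynomial (ZMod (p ^ β)))) *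
          Q ^ (p * m - k - 1) * Δ ^ (k + β - m)) * Q ^ (k + 1) := by
  have hdvd : (p : (ZMod (p ^ β))[T;T⁻¹][X]) ∣ Δ :=
    hΔ ▸ hQf ▸ natCast_dvd_expand_map_expand_sub_pow hβ Q
  refine ⟨hdvd, fun k => ?_⟩
  have hΔβ : Δ ^ β = 0 := by
    obtain ⟨E, rfl⟩ := hdvd
    rw [mul_pow, natCast_pow_eq_zero_of_zmod_algebra, zero_mul]
  rw [show Qf = Q ^ p + Δ by rw [hΔ, add_sub_cancel], add_pow_eq_sum_Icc_of_pow_eq_zero hΔβ,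
    Finset.sum_mul]
  refine Finset.sum_congr rfl fun m hm => ?_
  have hkm : k + 1 ≤ p * m :=
    (Finset.mem_Icc.mp hm).1.trans (Nat.le_mul_of_pos_left m (Fact.out : p.Prime).pos)
  have hQpm : (Q ^ p) ^ m = Q ^ (p * m - k - 1) * Q ^ (k + 1) := by
    rw [← pow_mul, ← pow_add, Nat.sub_sub, Nat.sub_add_cancel hkm]
  rw [hQpm]
  ring
end
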